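/- arXiv:2212.01873 — 2 statements merged into one kernel-verified Lean document; each statement's English description precedes it below -/
import Mathlib

section
/- Let n ≥ 3. Every D ∈ Γ_K with D·H > 0 is a linear combination with nonnegative integer coefficients of the simple roots l_0, l_1, …, l_{n−1}, and every D ∈ Γ_K with D·H = 0 equals E_i − E_j for some i ≠ j. In particular, for every normalized reduced class ω = (1 | m_1, …, m_n) and every D ∈ Γ_K with D·H > 0 one has ω·D ≥ 0. (Lemma 2.17(i).) -/
open Finset

noncomputable section

/-- The intersection pairing on ℝ^{1,n}: coordinate `0` is the coefficient of `H`,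
coordinate `i.succ` is the coefficient of `E_{i+1}`.  `H·H = 1`, `E_i·E_i = -1`,
distinct basis vectors are orthogonal. -/
def ip (n : ℕ) (x y : Fin (n + 1) → ℝ) : ℝ :=
  x 0 * y 0 - ∑ i : Fin n, x i.succ * y i.succ

/-- The canonical class `K = -3H + E_1 + ⋯ + E_n`. -/
def Kc (n : ℕ) : Fin (n + 1) → ℝ := fun j => if (j : ℕ) = 0 then -3 else 1

/-- The reflection `x ↦ x + (x·l)l` along `l`. -/
def reflAlong (n : ℕ) (l : Fin (n + 1) → ℝ) : Function.End (Fin (n + 1) → ℝ) :=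
  fun x => x + ip n x l • l

/-- The simple roots: `l_0 = H - E_1 - E_2 - E_3` and `l_i = E_i - E_{i+1}`
for `1 ≤ i ≤ n - 1`. -/
def root (n : ℕ) (i : Fin n) : Fin (n + 1) → ℝ :=
  if (i : ℕ) = 0 then
    fun j => if (j : ℕ) = 0 then 1 else if (j : ℕ) ≤ 3 then -1 else 0
  else
    fun j => if (j : ℕ) = (i : ℕ) then 1 else if (j : ℕ) = (i : ℕ) + 1 then -1 else 0

/-- The Weyl group `W_n`, generated by the simple reflections `s_{l_0}, …, s_{l_{n-1}}`.
(The generators are involutions, so the submonoid they generate coincides with the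
subgroup they generate.) -/
def Wgroup (n : ℕ) : Submonoid (Function.End (Fin (n + 1) → ℝ)) :=
  Submonoid.closure (Set.range fun i : Fin n => reflAlong n (root n i))

/-- The class `E_n`. -/
def En (n : ℕ) : Fin (n + 1) → ℝ := fun j => if (j : ℕ) = n then 1 else 0

/-- The set `ℰ_K` of exceptional classes: the `W_n`-orbit of `E_n`. -/
def EK (n : ℕ) : Set (Fin (n + 1) → ℝ) := {e | ∃ w ∈ Wgroup n, e = w (En n)}

/-- The class `H`. -/
def Hc (n : ℕ) : Fin (n + 1) → ℝ := fun j => if (j : ℕ) = 0 then 1 else 0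

/-- The class `E_i` (for `i : Fin n`, this is `E_{i+1}` in the paper's indexing
`E_1, …, E_n`). -/
def Ec (n : ℕ) (i : Fin n) : Fin (n + 1) → ℝ := fun j => if j = i.succ then 1 else 0

/-- The class `E_1 - E_2`. -/
def rootE12 (n : ℕ) : Fin (n + 1) → ℝ := fun j =>
  if (j : ℕ) = 1 then 1 else if (j : ℕ) = 2 then -1 else 0

/-- The `K`-root system `Γ_K`: the `W_n`-orbit of `E_1 - E_2`. -/
def GammaK (n : ℕ) : Set (Fin (n + 1) → ℝ) := {D | ∃ w ∈ Wgroup n, D = w (rootE12 n)}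

/-- The coefficients `m_1, …, m_n` of a class `νH - m_1E_1 - ⋯ - m_nE_n`. -/
def mcoord (n : ℕ) (v : Fin (n + 1) → ℝ) : Fin n → ℝ := fun i => -(v i.succ)

/-- A class `νH - m_1E_1 - ⋯ - m_nE_n` is reduced if
`m_1 ≥ m_2 ≥ ⋯ ≥ m_n ≥ 0` and `ν ≥ m_1 + m_2 + m_3`. -/
def IsReducedVec (n : ℕ) (v : Fin (n + 1) → ℝ) : Prop :=
  Antitone (mcoord n v) ∧ (∀ i, 0 ≤ mcoord n v i) ∧
    ∑ i ∈ Finset.univ.filter (fun i : Fin n => (i : ℕ) < 3), mcoord n v i ≤ v 0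

/-!
The simple roots satisfy `l_i·l_i = -2` and `l_i·l_j ∈ {0, 1}` for `i ≠ j`, so the simple
reflections are involutions obeying the commutation and braid relations of a simply-laced
Coxeter group, and the classical positivity argument applies: if `ℓ(w s) ≥ ℓ(w)` for the word
length `ℓ`, then `w l_s` is a nonnegative integer combination of simple roots. For the induction,
take a descent `t` of `w` and write `w = v u` with `u` in the dihedral group generated by `s` and
`t` and `v` shortest in its coset; then `u ∈ {t, st}`, so `w l_s` is `v l_s`, `v l_s + v l_t` or
`v l_t`. Hence every `D ∈ Γ_K` is a positive or a negative root, and the sign is that of its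
`H`-coefficient. A root with no `H`-part is an integral vector whose `E`-coefficients have sum `0`
(from `K·D = 0`) and square sum `2` (from `D·D = -2`), i.e. `E_i - E_j`. Finally, a reduced
class pairs nonnegatively with every simple root.
-/

section WordLength

variable {M ι : Type*} [Monoid M]

/-- Off `Submonoid.closure (Set.range g)` this is the junk value `sInf ∅ = 0`. -/
def wordLength (g : ι → M) (w : M) : ℕ :=
  sInf {k | ∃ L : List ι, L.length = k ∧ (L.map g).prod = w}

variable {g : ι → M} {w : M}

lemma wordLength_le (L : List ι) : wordLength g (L.map g).prod ≤ L.length :=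
  Nat.sInf_le ⟨L, rfl, rfl⟩

lemma exists_length_eq_wordLength (hw : w ∈ Submonoid.closure (Set.range g)) :
    ∃ L : List ι, L.length = wordLength g w ∧ (L.map g).prod = w := by
  rw [← FreeMonoid.mrange_lift] at hw
  obtain ⟨L, rfl⟩ := hw
  exact Nat.sInf_mem (s := {k | ∃ L' : List ι, L'.length = k ∧ (L'.map g).prod = _})
    ⟨_, L.toList, rfl, (FreeMonoid.lift_apply g L).symm⟩

lemma wordLength_mul_le (hw : w ∈ Submonoid.closure (Set.range g)) (L : List ι) :
    wordLength g (w * (L.map g).prod) ≤ wordLength g w + L.length := by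
  obtain ⟨L₀, hlen, rfl⟩ := exists_length_eq_wordLength hw
  simpa [hlen] using wordLength_le (g := g) (L₀ ++ L)

lemma wordLength_mul_generator_le (hw : w ∈ Submonoid.closure (Set.range g)) (s : ι) :
    wordLength g (w * g s) ≤ wordLength g w + 1 := by
  simpa using wordLength_mul_le hw [s]

lemma eq_one_of_wordLength_eq_zero (hw : w ∈ Submonoid.closure (Set.range g))
    (h : wordLength g w = 0) : w = 1 := by
  obtain ⟨L, hlen, rfl⟩ := exists_length_eq_wordLength hw
  simp [List.length_eq_zero_iff.mp (hlen.trans h)]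

lemma exists_wordLength_mul_lt (hinv : ∀ i, g i * g i = 1)
    (hw : w ∈ Submonoid.closure (Set.range g)) (h : wordLength g w ≠ 0) :
    ∃ t, wordLength g (w * g t) < wordLength g w := by
  obtain ⟨L, hlen, rfl⟩ := exists_length_eq_wordLength hw
  obtain ⟨L, t, rfl⟩ := (List.eq_nil_or_concat' L).resolve_left (by rintro rfl; simp_all)
  refine ⟨t, ?_⟩
  have := wordLength_le (g := g) L
  simp only [List.map_append, List.prod_append, List.map_singleton,
    List.prod_singleton, mul_assoc, hinv, mul_one, List.length_append,
    List.length_singleton] at hlen ⊢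
  omega

lemma wordLength_le_mul_add_one (hinv : ∀ i, g i * g i = 1)
    (hw : w ∈ Submonoid.closure (Set.range g)) (s : ι) :
    wordLength g w ≤ wordLength g (w * g s) + 1 := by
  have hws : w * g s ∈ Submonoid.closure (Set.range g) :=
    mul_mem hw (Submonoid.subset_closure (Set.mem_range_self s))
  simpa [mul_assoc, hinv] using wordLength_mul_generator_le hws s

/-- The word `u` is read from the right: its head is the last factor of `w`. -/
lemma exists_minimal_coset_rep (hinv : ∀ i, g i * g i = 1) (s t : ι)
    (hw : w ∈ Submonoid.closure (Set.range g)) :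
    ∃ v ∈ Submonoid.closure (Set.range g), ∃ u : List ι, (∀ x ∈ u, x = s ∨ x = t) ∧
      w = v * (u.map g).reverse.prod ∧ wordLength g w = wordLength g v + u.length ∧
      wordLength g v ≤ wordLength g (v * g s) ∧ wordLength g v ≤ wordLength g (v * g t) := by
  induction hN : wordLength g w using Nat.strong_induction_on generalizing w with
  | _ N ih =>
  subst hN
  by_cases hdesc : ∃ x, (x = s ∨ x = t) ∧ wordLength g (w * g x) < wordLength g w
  · obtain ⟨x, hx, hlt⟩ := hdesc
    obtain ⟨v, hv, u, hu, hwx, hlen, hvs, hvt⟩ :=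
      ih _ hlt (mul_mem hw (Submonoid.subset_closure (Set.mem_range_self x))) rfl
    refine ⟨v, hv, x :: u, by simpa [hx] using hu, ?_, ?_, hvs, hvt⟩
    · rw [List.map_cons, List.reverse_cons, List.prod_append, List.prod_singleton, ← mul_assoc,
        ← hwx, mul_assoc, hinv, mul_one]
    · have := wordLength_le_mul_add_one hinv hw x
      simp only [List.length_cons]
      omega
  · push Not at hdesc
    exact ⟨w, hw, [], by simp, by simp, by simp, hdesc s (.inl rfl), hdesc t (.inr rfl)⟩

lemma length_le_of_prod_eq {v x : M} {u : List ι} (hv : v ∈ Submonoid.closure (Set.range g))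
    (hlen : wordLength g (v * (u.map g).reverse.prod) = wordLength g v + u.length)
    (hx : wordLength g (v * (u.map g).reverse.prod) ≤
      wordLength g (v * (u.map g).reverse.prod * x))
    (u' : List ι) (hu' : (u'.map g).reverse.prod = (u.map g).reverse.prod * x) :
    u.length ≤ u'.length := by
  have := wordLength_mul_le hv u'.reverse
  rw [List.map_reverse, hu', ← mul_assoc, List.length_reverse] at this
  omega

section Dihedral

variable {s t : ι} {u : List ι}

lemma prod_reverse_map_cons (x : ι) (u : List ι) :
    ((x :: u).map g).reverse.prod = (u.map g).reverse.prod * g x := by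
  simp

lemma eq_nil_or_singleton_of_minimal_of_commute (hs : g s * g s = 1) (ht : g t * g t = 1)
    (hst : g s * g t = g t * g s) (hu : ∀ x ∈ u, x = s ∨ x = t)
    (hmin : ∀ u' : List ι, (u'.map g).reverse.prod = (u.map g).reverse.prod →
      u.length ≤ u'.length)
    (hmin_s : ∀ u' : List ι, (u'.map g).reverse.prod = (u.map g).reverse.prod * g s →
      u.length ≤ u'.length) :
    u = [] ∨ u = [t] := by
  have hs' (x : M) : x * g s * g s = x := by rw [mul_assoc, hs, mul_one]
  have ht' (x : M) : x * g t * g t = x := by rw [mul_assoc, ht, mul_one]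
  have hst' (x : M) : x * g s * g t = x * g t * g s := by rw [mul_assoc, hst, mul_assoc]
  rcases u with _ | ⟨x, _ | ⟨y, u⟩⟩
  · exact .inl rfl
  · rcases hu x (by simp) with hx | hx <;> subst x
    · simpa using hmin_s [] (by simp [hs])
    · exact .inr rfl
  · rcases hu x (by simp) with hx | hx <;> subst x
    · simpa using hmin_s (y :: u) (by simp only [prod_reverse_map_cons, hs'])
    rcases hu y (by simp) with hy | hy <;> subst y
    · simpa using hmin_s (t :: u) (by simp only [prod_reverse_map_cons, hst', hs'])
    · simpa using hmin u (by simp only [prod_reverse_map_cons, ht'])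

lemma eq_nil_or_singleton_or_pair_of_minimal_of_braid (hs : g s * g s = 1)
    (ht : g t * g t = 1) (hst : g s * g t * g s = g t * g s * g t)
    (hu : ∀ x ∈ u, x = s ∨ x = t)
    (hmin : ∀ u' : List ι, (u'.map g).reverse.prod = (u.map g).reverse.prod →
      u.length ≤ u'.length)
    (hmin_s : ∀ u' : List ι, (u'.map g).reverse.prod = (u.map g).reverse.prod * g s →
      u.length ≤ u'.length) :
    u = [] ∨ u = [t] ∨ u = [t, s] := by
  have hs' (x : M) : x * g s * g s = x := by rw [mul_assoc, hs, mul_one]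
  have ht' (x : M) : x * g t * g t = x := by rw [mul_assoc, ht, mul_one]
  have hst' (x : M) : x * g t * g s * g t = x * g s * g t * g s := by
    simp only [mul_assoc, hst]
  rcases u with _ | ⟨x, _ | ⟨y, _ | ⟨z, u⟩⟩⟩
  · exact .inl rfl
  · rcases hu x (by simp) with hx | hx <;> subst x
    · simpa using hmin_s [] (by simp [hs])
    · exact .inr (.inl rfl)
  · rcases hu x (by simp) with hx | hx <;> subst x
    · simpa using hmin_s [y] (by simp only [prod_reverse_map_cons, hs'])
    rcases hu y (by simp) with hy | hy <;> subst y
    · exact .inr (.inr rfl)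
    · simpa using hmin [] (by simp only [prod_reverse_map_cons, ht'])
  · rcases hu x (by simp) with hx | hx <;> subst x
    · simpa using hmin_s (y :: z :: u) (by simp only [prod_reverse_map_cons, hs'])
    rcases hu y (by simp) with hy | hy <;> subst y
    swap
    · simpa using hmin (z :: u) (by simp only [prod_reverse_map_cons, ht'])
    rcases hu z (by simp) with hz | hz <;> subst z
    · simpa using hmin (t :: u) (by simp only [prod_reverse_map_cons, hs'])
    · simpa using hmin_s (t :: s :: u) (by simp only [prod_reverse_map_cons, hst', hs'])

end Dihedral

end WordLength

namespace LinearMap.BilinForm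

variable {R V ι : Type*} [CommRing R] [AddCommGroup V] [Module R V] {B : LinearMap.BilinForm R V}

variable (B) in
def reflectAlong (v : V) : Function.End V := fun x => x + B x v • v

variable (B) in
def weylMonoid (α : ι → V) : Submonoid (Function.End V) :=
  Submonoid.closure (Set.range (B.reflectAlong ∘ α))

/-- In the sign convention of the intersection form: roots have square `-2` and distinct simple
roots pair to `0` or `1`, the negative of the usual simply-laced Cartan data. -/
structure IsSimplyLacedBase (B : LinearMap.BilinForm R V) (α : ι → V) : Prop where
  apply_self : ∀ i, B (α i) (α i) = -2
  apply_eq_zero_or_one : ∀ i j, i ≠ j → B (α i) (α j) = 0 ∨ B (α i) (α j) = 1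

lemma reflectAlong_apply (v x : V) : B.reflectAlong v x = x + B x v • v := rfl

lemma reflectAlong_self {v : V} (hv : B v v = -2) : B.reflectAlong v v = -v := by
  rw [reflectAlong_apply, hv]; module

lemma reflectAlong_of_eq_zero {u v : V} (huv : B u v = 0) : B.reflectAlong v u = u := by
  rw [reflectAlong_apply, huv, zero_smul, add_zero]

lemma reflectAlong_of_eq_one {u v : V} (huv : B u v = 1) : B.reflectAlong v u = u + v := by
  rw [reflectAlong_apply, huv, one_smul]

lemma reflectAlong_mul_self {v : V} (hv : B v v = -2) :
    B.reflectAlong v * B.reflectAlong v = 1 := by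
  funext x
  change B.reflectAlong v (B.reflectAlong v x) = x
  simp only [reflectAlong_apply, map_add, map_smul, LinearMap.add_apply, LinearMap.smul_apply,
    smul_eq_mul, hv]
  module

lemma reflectAlong_mul_comm {u v : V} (huv : B u v = 0) (hvu : B v u = 0) :
    B.reflectAlong u * B.reflectAlong v = B.reflectAlong v * B.reflectAlong u := by
  funext x
  change B.reflectAlong u (B.reflectAlong v x) = B.reflectAlong v (B.reflectAlong u x)
  simp only [reflectAlong_apply, map_add, map_smul, LinearMap.add_apply, LinearMap.smul_apply,
    smul_eq_mul, huv, hvu]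
  module

lemma reflectAlong_braid {u v : V} (hu : B u u = -2) (hv : B v v = -2) (huv : B u v = 1)
    (hvu : B v u = 1) :
    B.reflectAlong u * B.reflectAlong v * B.reflectAlong u =
      B.reflectAlong v * B.reflectAlong u * B.reflectAlong v := by
  funext x
  change B.reflectAlong u (B.reflectAlong v (B.reflectAlong u x)) =
    B.reflectAlong v (B.reflectAlong u (B.reflectAlong v x))
  simp only [reflectAlong_apply, map_add, map_smul, LinearMap.add_apply, LinearMap.smul_apply,
    smul_eq_mul, hu, hv, huv, hvu]
  module

variable {α : ι → V} {w : Function.End V}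

lemma exists_linearMap_eq_of_mem_weylMonoid (hw : w ∈ B.weylMonoid α) :
    ∃ f : V →ₗ[R] V, ⇑f = w := by
  induction hw using Submonoid.closure_induction with
  | mem _ hx =>
    obtain ⟨i, rfl⟩ := hx
    exact ⟨LinearMap.id + (B.flip (α i)).smulRight (α i), rfl⟩
  | one => exact ⟨LinearMap.id, rfl⟩
  | mul _ _ _ _ hf hg =>
    obtain ⟨f, rfl⟩ := hf
    obtain ⟨g, rfl⟩ := hg
    exact ⟨f ∘ₗ g, rfl⟩

lemma apply_apply_of_mem_weylMonoid (hB : B.IsSymm) (hα : ∀ i, B (α i) (α i) = -2)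
    (hw : w ∈ B.weylMonoid α) (x y : V) : B (w x) (w y) = B x y := by
  induction hw using Submonoid.closure_induction generalizing x y with
  | mem _ hx =>
    obtain ⟨i, rfl⟩ := hx
    simp only [Function.comp_apply, reflectAlong_apply, map_add, map_smul, LinearMap.add_apply,
      LinearMap.smul_apply, smul_eq_mul, hα, hB.eq (α i) y]
    ring
  | one => rfl
  | mul f g _ _ hf hg => exact (hf (g x) (g y)).trans (hg x y)

lemma IsSimplyLacedBase.exists_dihedral_reduction (hB : B.IsSymm)
    (h : IsSimplyLacedBase B α) (hw : w ∈ B.weylMonoid α) (s : ι)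
    (hws : wordLength (B.reflectAlong ∘ α) w ≤
      wordLength (B.reflectAlong ∘ α) (w * B.reflectAlong (α s)))
    (h0 : wordLength (B.reflectAlong ∘ α) w ≠ 0) :
    ∃ t, s ≠ t ∧ ∃ v ∈ B.weylMonoid α,
      wordLength (B.reflectAlong ∘ α) v < wordLength (B.reflectAlong ∘ α) w ∧
      wordLength (B.reflectAlong ∘ α) v ≤
        wordLength (B.reflectAlong ∘ α) (v * B.reflectAlong (α s)) ∧
      wordLength (B.reflectAlong ∘ α) v ≤
        wordLength (B.reflectAlong ∘ α) (v * B.reflectAlong (α t)) ∧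
      (w = v * B.reflectAlong (α t) ∨
        B (α s) (α t) = 1 ∧ w = v * B.reflectAlong (α s) * B.reflectAlong (α t)) := by
  have hinv (i : ι) : (B.reflectAlong ∘ α) i * (B.reflectAlong ∘ α) i = 1 :=
    reflectAlong_mul_self (h.apply_self i)
  obtain ⟨t, ht⟩ := exists_wordLength_mul_lt hinv hw h0
  have hst : s ≠ t := by rintro rfl; exact absurd hws (not_le.mpr ht)
  obtain ⟨v, hv, u, hu, rfl, hlen, hvs, hvt⟩ := exists_minimal_coset_rep hinv s t hw
  have hmin := length_le_of_prod_eq hv hlen (x := 1) (by rw [mul_one])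
  simp only [mul_one] at hmin
  have hmin_s := length_le_of_prod_eq hv hlen hws
  have hu_ne : u ≠ [] := by
    rintro rfl
    simp only [List.map_nil, List.reverse_nil, List.prod_nil, mul_one] at ht
    omega
  have hvw : wordLength (B.reflectAlong ∘ α) v < wordLength (B.reflectAlong ∘ α)
      (v * (u.map (B.reflectAlong ∘ α)).reverse.prod) := by
    have := List.length_pos_of_ne_nil hu_ne
    omega
  refine ⟨t, hst, v, hv, hvw, hvs, hvt, ?_⟩
  have hts : B (α t) (α s) = B (α s) (α t) := hB.eq _ _
  rcases h.apply_eq_zero_or_one s t hst with hzero | hone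
  · obtain rfl | rfl := eq_nil_or_singleton_of_minimal_of_commute (hinv s) (hinv t)
      (reflectAlong_mul_comm hzero (hts.trans hzero)) hu hmin hmin_s
    · exact absurd rfl hu_ne
    · left; simp
  · obtain rfl | rfl | rfl := eq_nil_or_singleton_or_pair_of_minimal_of_braid (hinv s)
      (hinv t) (reflectAlong_braid (h.apply_self s) (h.apply_self t) hone (hts.trans hone))
      hu hmin hmin_s
    · exact absurd rfl hu_ne
    · left; simp
    · right; simp [hone, mul_assoc]

theorem IsSimplyLacedBase.apply_mem_closure_of_wordLength_le (hB : B.IsSymm)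
    (h : IsSimplyLacedBase B α) (hw : w ∈ B.weylMonoid α) (s : ι)
    (hws : wordLength (B.reflectAlong ∘ α) w ≤
      wordLength (B.reflectAlong ∘ α) (w * B.reflectAlong (α s))) :
    w (α s) ∈ AddSubmonoid.closure (Set.range α) := by
  induction hN : wordLength (B.reflectAlong ∘ α) w using Nat.strong_induction_on
    generalizing w s with
  | _ N ih =>
  subst hN
  by_cases h0 : wordLength (B.reflectAlong ∘ α) w = 0
  · rw [eq_one_of_wordLength_eq_zero hw h0]
    exact AddSubmonoid.subset_closure (Set.mem_range_self s)
  obtain ⟨t, hst, v, hv, hvw, hvs, hvt, hwv⟩ := h.exists_dihedral_reduction hB hw s hws h0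
  have hvs_pos := ih _ hvw hv s hvs rfl
  have hvt_pos := ih _ hvw hv t hvt rfl
  obtain ⟨f, rfl⟩ := exists_linearMap_eq_of_mem_weylMonoid hv
  rcases hwv with rfl | ⟨hone, rfl⟩
  · change f (B.reflectAlong (α t) (α s)) ∈ _
    rcases h.apply_eq_zero_or_one s t hst with hzero | hone
    · rwa [reflectAlong_of_eq_zero hzero]
    · rw [reflectAlong_of_eq_one hone, map_add]
      exact add_mem hvs_pos hvt_pos
  · have hst_s : B.reflectAlong (α s) (α s + α t) = α t := by
      rw [reflectAlong_apply, map_add, LinearMap.add_apply, h.apply_self s, ← hB.eq, hone]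
      module
    change f (B.reflectAlong (α s) (B.reflectAlong (α t) (α s))) ∈ _
    rwa [reflectAlong_of_eq_one hone, hst_s]

theorem IsSimplyLacedBase.apply_mem_closure_or_neg_mem_closure (hB : B.IsSymm)
    (h : IsSimplyLacedBase B α) (hw : w ∈ B.weylMonoid α) (s : ι) :
    w (α s) ∈ AddSubmonoid.closure (Set.range α) ∨
      -w (α s) ∈ AddSubmonoid.closure (Set.range α) := by
  have hinv := reflectAlong_mul_self (h.apply_self s)
  by_cases hws : wordLength (B.reflectAlong ∘ α) w ≤
      wordLength (B.reflectAlong ∘ α) (w * B.reflectAlong (α s))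
  · exact .inl (h.apply_mem_closure_of_wordLength_le hB hw s hws)
  · have hv : w * B.reflectAlong (α s) ∈ B.weylMonoid α :=
      mul_mem hw (Submonoid.subset_closure ⟨s, rfl⟩)
    have hvs := h.apply_mem_closure_of_wordLength_le hB hv s
      (by rw [mul_assoc, hinv, mul_one]; omega)
    obtain ⟨f, rfl⟩ := exists_linearMap_eq_of_mem_weylMonoid hw
    change f (B.reflectAlong (α s) (α s)) ∈ _ at hvs
    rw [reflectAlong_self (h.apply_self s), map_neg] at hvs
    exact .inr hvs

end LinearMap.BilinForm

lemma exists_eq_single_sub_single_of_sum_sq_eq_two {ι : Type*} [Fintype ι] [DecidableEq ι]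
    {g : ι → ℤ} (hsq : ∑ k, g k ^ 2 = 2) (hsum : ∑ k, g k = 0) :
    ∃ i j, i ≠ j ∧ g = Pi.single i 1 - Pi.single j 1 := by
  have hne : g ≠ 0 := by rintro rfl; simp at hsq
  obtain ⟨i, hi⟩ : ∃ i, 0 < g i := by
    by_contra! h
    exact hne (funext fun k => (sum_eq_zero_iff_of_nonpos fun k _ => h k).mp hsum k (mem_univ k))
  obtain ⟨j, hj⟩ : ∃ j, g j < 0 := by
    by_contra! h
    exact hne (funext fun k => (sum_eq_zero_iff_of_nonneg fun k _ => h k).mp hsum k (mem_univ k))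
  have hij : i ≠ j := by rintro rfl; omega
  have hsplit : g i ^ 2 + g j ^ 2 + ∑ k ∈ univ \ {i, j}, g k ^ 2 = 2 := by
    rw [← hsq, ← sum_pair (f := fun k => g k ^ 2) hij, add_comm, sum_sdiff (subset_univ _)]
  have hrest : 0 ≤ ∑ k ∈ univ \ {i, j}, g k ^ 2 := sum_nonneg fun _ _ => sq_nonneg _
  have hgi : g i = 1 := by nlinarith
  have hgj : g j = -1 := by nlinarith
  have hzero : ∀ k ∈ univ \ {i, j}, g k ^ 2 = 0 :=
    (sum_eq_zero_iff_of_nonneg fun _ _ => sq_nonneg _).mp (by rw [hgi, hgj] at hsplit; linarith)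
  refine ⟨i, j, hij, funext fun k => ?_⟩
  by_cases hki : k = i
  · subst hki; simp [hgi, hij]
  by_cases hkj : k = j
  · subst hkj; simp [hgj, Ne.symm hij]
  simpa [hki, hkj] using hzero k (by simp [hki, hkj])

def ipForm (n : ℕ) : LinearMap.BilinForm ℝ (Fin (n + 1) → ℝ) :=
  LinearMap.mk₂ ℝ (ip n)
    (fun x y z => by simp only [ip, Pi.add_apply, add_mul, sum_add_distrib]; ring)
    (fun c x y => by simp only [ip, Pi.smul_apply, smul_eq_mul, mul_sub, mul_sum, mul_assoc])
    (fun x y z => by simp only [ip, Pi.add_apply, mul_add, sum_add_distrib]; ring)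
    (fun c x y => by simp only [ip, Pi.smul_apply, smul_eq_mul, mul_sub, mul_sum, mul_left_comm])

lemma ipForm_apply (n : ℕ) (x y : Fin (n + 1) → ℝ) : ipForm n x y = ip n x y := rfl

lemma ipForm_isSymm (n : ℕ) : (ipForm n).IsSymm :=
  ⟨fun x y => by simp only [ipForm_apply, ip, mul_comm]⟩

section Concrete

variable {n : ℕ}

lemma root_apply (i : Fin n) (j : Fin (n + 1)) :
    root n i j =
      if (i : ℕ) = 0 then (if (j : ℕ) = 0 then 1 else if (j : ℕ) ≤ 3 then -1 else 0)
      else (if (j : ℕ) = i then 1 else if (j : ℕ) = i + 1 then -1 else 0) := by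
  unfold root
  exact apply_ite (fun f : Fin (n + 1) → ℝ => f j) _ _ _

lemma root_eq_of_ne_zero {i : Fin n} (hi : (i : ℕ) ≠ 0) :
    root n i = Pi.single i.castSucc 1 - Pi.single i.succ 1 := by
  funext j
  simp only [root_apply, hi, if_false, Pi.sub_apply, Pi.single_apply, Fin.ext_iff,
    Fin.val_castSucc, Fin.val_succ]
  split_ifs <;> first | omega | norm_num

lemma ip_single_of_ne_zero (x : Fin (n + 1) → ℝ) {k : Fin (n + 1)} (hk : k ≠ 0) :
    ip n x (Pi.single k 1) = -x k := by
  obtain ⟨j, rfl⟩ := Fin.exists_succ_eq.mpr hk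
  simp [ip, Pi.single_apply, Fin.succ_ne_zero]

lemma ip_root_of_ne_zero (x : Fin (n + 1) → ℝ) {i : Fin n} (hi : (i : ℕ) ≠ 0) :
    ip n x (root n i) = x i.succ - x i.castSucc := by
  have hi' : i.castSucc ≠ 0 := by simpa [Fin.ext_iff] using hi
  rw [root_eq_of_ne_zero hi, ← ipForm_apply, map_sub, ipForm_apply, ipForm_apply,
    ip_single_of_ne_zero x hi', ip_single_of_ne_zero x i.succ_ne_zero]
  ring

lemma ip_root_of_eq_zero (x : Fin (n + 1) → ℝ) {i : Fin n} (hi : (i : ℕ) = 0) :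
    ip n x (root n i) = x 0 + ∑ j ∈ univ.filter (fun j : Fin n => (j : ℕ) < 3), x j.succ := by
  simp only [ip, root, hi, if_true, Fin.val_zero, Fin.val_succ, Finset.sum_filter]
  have hterm (j : Fin n) : x j.succ * (if (j : ℕ) + 1 = 0 then 1 else
      if (j : ℕ) + 1 ≤ 3 then -1 else 0) = -(if (j : ℕ) < 3 then x j.succ else 0) := by
    by_cases hj : (j : ℕ) < 3
    · rw [if_neg (by omega), if_pos (by omega), if_pos hj, mul_neg_one]
    · rw [if_neg (by omega), if_neg (by omega), if_neg hj, mul_zero, neg_zero]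
  simp only [hterm, Finset.sum_neg_distrib]
  ring

lemma sum_filter_lt_three_of_eq (hn : 3 ≤ n) {f : Fin n → ℝ} {c : ℝ}
    (hf : ∀ j : Fin n, (j : ℕ) < 3 → f j = c) :
    ∑ j ∈ univ.filter (fun j : Fin n => (j : ℕ) < 3), f j = 3 * c := by
  rw [Finset.sum_congr rfl fun j hj => hf j (Finset.mem_filter.mp hj).2, Finset.sum_const,
    Fin.card_filter_val_lt, min_eq_right hn, nsmul_eq_mul, Nat.cast_ofNat]

lemma ip_root_self (hn : 3 ≤ n) (i : Fin n) : ip n (root n i) (root n i) = -2 := by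
  by_cases hi : (i : ℕ) = 0
  · rw [ip_root_of_eq_zero _ hi, sum_filter_lt_three_of_eq hn (c := -1) fun j hj => ?_]
    · norm_num [root_apply, hi]
    · simp only [root_apply, hi, Fin.val_succ, if_true]
      rw [if_neg (by omega), if_pos (by omega)]
  · rw [ip_root_of_ne_zero _ hi]
    norm_num [root_apply, hi]

lemma ip_root_root_of_ne {s t : Fin n} (hst : s ≠ t) :
    ip n (root n s) (root n t) = 0 ∨ ip n (root n s) (root n t) = 1 := by
  wlog ht : (t : ℕ) ≠ 0 generalizing s t
  · rw [← ipForm_apply, (ipForm_isSymm n).eq, ipForm_apply]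
    exact this hst.symm (fun h => hst (Fin.ext (by omega)))
  rw [ip_root_of_ne_zero _ ht]
  rw [Ne, Fin.ext_iff] at hst
  simp only [root_apply, Fin.val_succ, Fin.val_castSucc]
  split_ifs <;> norm_num <;> omega

lemma ip_root_Kc (hn : 3 ≤ n) (i : Fin n) : ip n (root n i) (Kc n) = 0 := by
  rw [← ipForm_apply, (ipForm_isSymm n).eq, ipForm_apply]
  by_cases hi : (i : ℕ) = 0
  · rw [ip_root_of_eq_zero _ hi, sum_filter_lt_three_of_eq hn (c := 1) fun j _ => by simp [Kc]]
    norm_num [Kc]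
  · rw [ip_root_of_ne_zero _ hi]
    simp [Kc, hi]

lemma rootE12_eq (hn : 1 < n) : rootE12 n = root n ⟨1, by omega⟩ := by
  funext j
  simp [rootE12, root]

lemma root_apply_zero_nonneg (i : Fin n) : 0 ≤ root n i 0 := by
  simp only [root_apply, Fin.val_zero]
  split_ifs <;> simp_all

lemma ip_root_nonneg_of_isReducedVec {ω : Fin (n + 1) → ℝ} (hω : IsReducedVec n ω)
    (i : Fin n) :
    0 ≤ ip n ω (root n i) := by
  obtain ⟨hanti, -, hsum⟩ := hω
  by_cases hi : (i : ℕ) = 0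
  · rw [ip_root_of_eq_zero _ hi]
    simp only [mcoord, Finset.sum_neg_distrib] at hsum
    linarith
  · rw [ip_root_of_ne_zero _ hi]
    have hprev : (⟨i - 1, by omega⟩ : Fin n).succ = i.castSucc := Fin.ext (by simp; omega)
    have := hanti (show (⟨i - 1, by omega⟩ : Fin n) ≤ i from Fin.mk_le_of_le_val (by omega))
    simp only [mcoord, hprev] at this
    linarith

lemma isSimplyLacedBase_root (hn : 3 ≤ n) : (ipForm n).IsSimplyLacedBase (root n) :=
  ⟨ip_root_self hn, fun _ _ hst => ip_root_root_of_ne hst⟩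

lemma mem_closure_or_neg_mem_closure_of_mem_GammaK (hn : 3 ≤ n) {D : Fin (n + 1) → ℝ}
    (hD : D ∈ GammaK n) :
    D ∈ AddSubmonoid.closure (Set.range (root n)) ∨
      -D ∈ AddSubmonoid.closure (Set.range (root n)) := by
  obtain ⟨w, hw, rfl⟩ := hD
  rw [rootE12_eq (by omega)]
  exact (isSimplyLacedBase_root hn).apply_mem_closure_or_neg_mem_closure (ipForm_isSymm n) hw _

lemma ip_self_of_mem_GammaK (hn : 3 ≤ n) {D : Fin (n + 1) → ℝ} (hD : D ∈ GammaK n) :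
    ip n D D = -2 := by
  obtain ⟨w, hw, rfl⟩ := hD
  rw [rootE12_eq (by omega), ← ipForm_apply,
    LinearMap.BilinForm.apply_apply_of_mem_weylMonoid (ipForm_isSymm n) (ip_root_self hn) hw]
  exact ip_root_self hn _

lemma apply_zero_nonneg_of_mem_closure {x : Fin (n + 1) → ℝ}
    (hx : x ∈ AddSubmonoid.closure (Set.range (root n))) : 0 ≤ x 0 := by
  induction hx using AddSubmonoid.closure_induction with
  | mem _ h =>
    obtain ⟨i, rfl⟩ := h
    exact root_apply_zero_nonneg i
  | zero => exact le_rfl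
  | add _ _ _ _ hx hy => exact add_nonneg hx hy

lemma exists_nat_coeffs_of_mem_closure {x : Fin (n + 1) → ℝ}
    (hx : x ∈ AddSubmonoid.closure (Set.range (root n))) :
    ∃ c : Fin n → ℕ, x = ∑ i, (c i : ℝ) • root n i := by
  obtain ⟨c, rfl⟩ := AddSubmonoid.mem_closure_range_iff_of_fintype.mp hx
  exact ⟨c, by simp only [Nat.cast_smul_eq_nsmul]⟩

lemma mem_range_intCast_of_mem_closure {x : Fin (n + 1) → ℝ}
    (hx : x ∈ AddSubgroup.closure (Set.range (root n))) (j : Fin (n + 1)) :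
    x j ∈ (Int.castRingHom ℝ).range := by
  induction hx using AddSubgroup.closure_induction with
  | mem _ h =>
    obtain ⟨i, rfl⟩ := h
    rw [root_apply]
    split_ifs <;> first | exact one_mem _ | exact neg_mem (one_mem _) | exact zero_mem _
  | zero => exact zero_mem _
  | add _ _ _ _ ha hb => exact add_mem ha hb
  | neg _ _ ha => exact neg_mem ha

lemma closure_root_le_ker_Kc (hn : 3 ≤ n) :
    AddSubgroup.closure (Set.range (root n)) ≤
      (LinearMap.ker ((ipForm n).flip (Kc n))).toAddSubgroup := by
  rw [AddSubgroup.closure_le]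
  rintro _ ⟨i, rfl⟩
  exact ip_root_Kc hn i

lemma ip_Hc (D : Fin (n + 1) → ℝ) : ip n D (Hc n) = D 0 := by
  simp [ip, Hc]

lemma exists_eq_Ec_sub_Ec_of_mem_GammaK (hn : 3 ≤ n) {D : Fin (n + 1) → ℝ}
    (hD : D ∈ GammaK n) (h0 : D 0 = 0) : ∃ i j : Fin n, i ≠ j ∧ D = Ec n i - Ec n j := by
  have hDc : D ∈ AddSubgroup.closure (Set.range (root n)) := by
    rcases mem_closure_or_neg_mem_closure_of_mem_GammaK hn hD with h | h
    · exact AddSubgroup.le_closure_toAddSubmonoid _ h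
    · have h' : -D ∈ AddSubgroup.closure (Set.range (root n)) :=
        AddSubgroup.le_closure_toAddSubmonoid _ h
      simpa using neg_mem h'
  have hK : ip n D (Kc n) = 0 := closure_root_le_ker_Kc hn hDc
  have hself := ip_self_of_mem_GammaK hn hD
  choose z hz using mem_range_intCast_of_mem_closure hDc
  simp only [eq_intCast] at hz
  have hsq : ∑ k : Fin n, z k.succ ^ 2 = 2 := by
    have : ((∑ k : Fin n, z k.succ ^ 2 : ℤ) : ℝ) = 2 := by
      simp only [ip, h0, ← hz] at hself
      push_cast
      simp only [sq]
      linarith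
    exact_mod_cast this
  have hsum : ∑ k : Fin n, z k.succ = 0 := by
    have : ((∑ k : Fin n, z k.succ : ℤ) : ℝ) = 0 := by
      simpa [ip, Kc, h0, ← hz] using hK
    exact_mod_cast this
  obtain ⟨i, j, hij, hij_eq⟩ := exists_eq_single_sub_single_of_sum_sq_eq_two hsq hsum
  refine ⟨i, j, hij, funext fun p => ?_⟩
  induction p using Fin.cases with
  | zero => simp [Ec, h0, (Fin.succ_ne_zero _).symm]
  | succ q => simp [Ec, ← hz, congrFun hij_eq q, Pi.single_apply]

lemma mem_closure_of_mem_GammaK_of_pos (hn : 3 ≤ n) {D : Fin (n + 1) → ℝ}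
    (hD : D ∈ GammaK n) (hpos : 0 < D 0) : D ∈ AddSubmonoid.closure (Set.range (root n)) := by
  refine (mem_closure_or_neg_mem_closure_of_mem_GammaK hn hD).resolve_right fun h => ?_
  have := apply_zero_nonneg_of_mem_closure h
  rw [Pi.neg_apply] at this
  linarith

lemma ip_nonneg_of_isReducedVec_of_mem_closure {ω x : Fin (n + 1) → ℝ}
    (hω : IsReducedVec n ω) (hx : x ∈ AddSubmonoid.closure (Set.range (root n))) :
    0 ≤ ip n ω x := by
  induction hx using AddSubmonoid.closure_induction with
  | mem _ h =>
    obtain ⟨i, rfl⟩ := h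
    exact ip_root_nonneg_of_isReducedVec hω i
  | zero => simp [ip]
  | add _ _ _ _ hx hy =>
    rw [← ipForm_apply, map_add, ipForm_apply, ipForm_apply]
    exact add_nonneg hx hy

end Concrete

/-- Lemma 2.17(i): every `D ∈ Γ_K` with `D·H > 0` is a nonnegative integer
combination of the simple roots `l_0, …, l_{n-1}`; every `D ∈ Γ_K` with `D·H = 0`
equals `E_i - E_j` for some `i ≠ j`; and consequently every normalized reduced
class pairs nonnegatively with every `D ∈ Γ_K` having `D·H > 0`. -/
theorem gammaK_positive_roots
    (n : ℕ) (hn : 3 ≤ n) :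
    (∀ D ∈ GammaK n, 0 < ip n D (Hc n) →
      ∃ c : Fin n → ℕ, D = ∑ i, (c i : ℝ) • root n i) ∧
    (∀ D ∈ GammaK n, ip n D (Hc n) = 0 →
      ∃ i j : Fin n, i ≠ j ∧ D = Ec n i - Ec n j) ∧
    (∀ ω : Fin (n + 1) → ℝ, ω 0 = 1 → IsReducedVec n ω →
      ∀ D ∈ GammaK n, 0 < ip n D (Hc n) → 0 ≤ ip n ω D) := by
  simp only [ip_Hc]
  exact ⟨fun D hD hpos => exists_nat_coeffs_of_mem_closure
      (mem_closure_of_mem_GammaK_of_pos hn hD hpos),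
    fun D hD h0 => exists_eq_Ec_sub_Ec_of_mem_GammaK hn hD h0,
    fun ω _ hω D hD hpos => ip_nonneg_of_isReducedVec_of_mem_closure hω
      (mem_closure_of_mem_GammaK_of_pos hn hD hpos)⟩
end
end

section
/- Let n ≥ 3 and let D = aH − b_1E_1 − ⋯ − b_nE_n ∈ ℤ^{1,n} satisfy D·D = −2 and K·D = 0 (equivalently, b_1 + ⋯ + b_n = 3a and b_1² + ⋯ + b_n² = a² + 2), with a > 0 and b_1 ≥ b_2 ≥ ⋯ ≥ b_n ≥ 0. Then a < b_1 + b_2 + b_3. Moreover, if D ≠ H − E_1 − E_2 − E_3, then b_1 + b_2 + b_3 ≤ 2a; consequently the Cremona reflection image s_{l_0}(D) = D + (D·l_0)l_0, where l_0 = H − E_1 − E_2 − E_3, has H-coefficient 2a − b_1 − b_2 − b_3 satisfying 0 ≤ 2a − b_1 − b_2 − b_3 < a. (The descent inequalities used in the proof of Lemma 2.17, following Proposition 4.10 of Li–Wu.) -/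
/-!
Write `x ≥ y ≥ z` for `b_1, b_2, b_3` and `t`, `q` for the sum and the sum of squares of the
remaining `b_i`. Since `0 ≤ b_i ≤ z` for those, `q ≤ z t`, so
`a² + 2 ≤ x² + y² + z (3a - x - y)`; if `x + y + z ≤ a`, expanding with `s = a - x - y - z ≥ 0`
shows the right-hand side is at most `a²`. If `x + y + z > 2a`, then
`(2a + 1)² ≤ (x + y + z)² ≤ 3 (x² + y² + z²) ≤ 3a² + 6` forces `a = 1`, and then
`x = y = z = 1`, `t = 0`, i.e. `D = H - E_1 - E_2 - E_3`.
-/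

open Finset

theorem Fin.sum_univ_eq_first_three_add_sum_rest {M : Type*} [AddCommMonoid M] {n : ℕ}
    (hn : 3 ≤ n) (f : Fin n → M) :
    ∑ i, f i = f ⟨0, by omega⟩ + f ⟨1, by omega⟩ + f ⟨2, by omega⟩ +
      ∑ i with 3 ≤ i.val, f i := by
  have hfirst : ({i | ¬ 3 ≤ i.val} : Finset (Fin n)) =
      {⟨0, by omega⟩, ⟨1, by omega⟩, ⟨2, by omega⟩} := by
    ext ⟨i, hi⟩
    simp only [mem_filter, mem_univ, true_and, mem_insert, mem_singleton, Fin.mk.injEq]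
    omega
  rw [← sum_filter_not_add_sum_filter univ (3 ≤ ·.val), hfirst, sum_insert (by simp),
    sum_pair (by simp), ← add_assoc]

theorem Finset.sum_sq_le_mul_sum {ι R : Type*} [Semiring R] [PartialOrder R] [IsOrderedRing R]
    {s : Finset ι} {f : ι → R} {c : R} (h0 : ∀ i ∈ s, 0 ≤ f i) (hc : ∀ i ∈ s, f i ≤ c) :
    ∑ i ∈ s, f i ^ 2 ≤ c * ∑ i ∈ s, f i := by
  rw [mul_sum]
  exact sum_le_sum fun i hi => by
    rw [sq]
    exact mul_le_mul_of_nonneg_right (hc i hi) (h0 i hi)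

theorem lt_top_three_sum {R : Type*} [CommRing R] [LinearOrder R] [IsStrictOrderedRing R]
    {a x y z t q : R} (hxy : y ≤ x) (hyz : z ≤ y) (hz : 0 ≤ z) (hq : q ≤ z * t)
    (hsum : x + y + z + t = 3 * a) (hsq : a ^ 2 < x ^ 2 + y ^ 2 + z ^ 2 + q) :
    a < x + y + z := by
  by_contra! hle
  have hs : 0 ≤ a - (x + y + z) := sub_nonneg.2 hle
  -- `a² - x² - y² - z (3a - x - y) = 2 (x y - z²) + s² + 2 s y + s (2 x - z)`
  nlinarith [mul_nonneg (hz.trans (hyz.trans hxy)) (sub_nonneg.2 hyz),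
    mul_nonneg hz (sub_nonneg.2 (hyz.trans hxy)), mul_nonneg hs (hz.trans hyz),
    mul_nonneg hs (by linarith : 0 ≤ 2 * x - z), mul_nonneg hs hs]

theorem top_three_eq_one_of_two_mul_lt {a x y z t : ℤ} (ht : 0 ≤ t)
    (hsum : x + y + z + t = 3 * a) (hsq : x ^ 2 + y ^ 2 + z ^ 2 ≤ a ^ 2 + 2)
    (hlt : 2 * a < x + y + z) : a = 1 ∧ x = 1 ∧ y = 1 ∧ z = 1 ∧ t = 0 := by
  have hcs : (x + y + z) ^ 2 ≤ 3 * (x ^ 2 + y ^ 2 + z ^ 2) := by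
    nlinarith [sq_nonneg (x - y), sq_nonneg (y - z), sq_nonneg (x - z)]
  obtain rfl : a = 1 := by nlinarith
  have hdev : (x - 1) ^ 2 + (y - 1) ^ 2 + (z - 1) ^ 2 ≤ 0 := by nlinarith
  refine ⟨rfl, ?_, ?_, ?_, by omega⟩ <;>
    nlinarith [sq_nonneg (x - 1), sq_nonneg (y - 1), sq_nonneg (z - 1)]

/-- The descent inequalities used in the proof of Lemma 2.17
(following Li–Wu, Proposition 4.10). Let `D = aH - b_1E_1 - ⋯ - b_nE_n ∈ ℤ^{1,n}`
with `D·D = -2` and `K·D = 0` (equivalently `b_1 + ⋯ + b_n = 3a` and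
`b_1² + ⋯ + b_n² = a² + 2`), `a > 0` and `b_1 ≥ b_2 ≥ ⋯ ≥ b_n ≥ 0`.
Then `a < b_1 + b_2 + b_3`, and if `D ≠ H - E_1 - E_2 - E_3` then
`b_1 + b_2 + b_3 ≤ 2a`; consequently the `H`-coefficient `2a - b_1 - b_2 - b_3`
of the Cremona reflection image `s_{l_0}(D)` satisfies
`0 ≤ 2a - b_1 - b_2 - b_3 < a`.  Here `b i` denotes `b_{i+1}`, so `b_1 = b ⟨0,_⟩`. -/
theorem cremona_descent_inequalities
    (n : ℕ) (hn : 3 ≤ n) (a : ℤ) (b : Fin n → ℤ)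
    (hsum : ∑ i, b i = 3 * a)
    (hsq : ∑ i, (b i) ^ 2 = a ^ 2 + 2)
    (hmono : Antitone b)
    (hnn : ∀ i, 0 ≤ b i) :
    a < b ⟨0, by omega⟩ + b ⟨1, by omega⟩ + b ⟨2, by omega⟩ ∧
    ((¬ (a = 1 ∧ ∀ i : Fin n, b i = if (i : ℕ) < 3 then 1 else 0)) →
      b ⟨0, by omega⟩ + b ⟨1, by omega⟩ + b ⟨2, by omega⟩ ≤ 2 * a ∧
      0 ≤ 2 * a - (b ⟨0, by omega⟩ + b ⟨1, by omega⟩ + b ⟨2, by omega⟩) ∧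
      2 * a - (b ⟨0, by omega⟩ + b ⟨1, by omega⟩ + b ⟨2, by omega⟩) < a) := by
  rw [Fin.sum_univ_eq_first_three_add_sum_rest hn] at hsum hsq
  set rest : Finset (Fin n) := {i | 3 ≤ i.val}
  have hrest_nonneg : ∀ i ∈ rest, 0 ≤ b i := fun i _ => hnn i
  have hrest_le : ∀ i ∈ rest, b i ≤ b ⟨2, by omega⟩ :=
    fun i hi => hmono (Fin.mk_le_of_le_val (by simp [rest] at hi; omega))
  have hlt := lt_top_three_sum (hmono (by simp [Fin.le_def])) (hmono (by simp [Fin.le_def]))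
    (hnn _) (sum_sq_le_mul_sum hrest_nonneg hrest_le) hsum (by linarith)
  refine ⟨hlt, fun hD => ?_⟩
  have hle : b ⟨0, by omega⟩ + b ⟨1, by omega⟩ + b ⟨2, by omega⟩ ≤ 2 * a := by
    by_contra! h2a
    have hrest_sq : 0 ≤ ∑ i ∈ rest, b i ^ 2 := sum_nonneg fun i _ => sq_nonneg (b i)
    obtain ⟨rfl, h0, h1, h2, hrest_zero⟩ :=
      top_three_eq_one_of_two_mul_lt (sum_nonneg hrest_nonneg) hsum (by linarith) h2a
    refine hD ⟨rfl, fun ⟨i, hi⟩ => ?_⟩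
    split_ifs with hi3
    · interval_cases i <;> assumption
    · exact (sum_eq_zero_iff_of_nonneg hrest_nonneg).1 hrest_zero _ (by simpa [rest] using hi3)
  exact ⟨hle, by linarith, by linarith⟩
end
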